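/- arXiv:2404.01962 — 5 statements merged into one kernel-verified Lean document; each statement's English description precedes it below -/
import Mathlib

section
/- For an invertible n×n real matrix B and any real number γ, the integral over the unit sphere S^{n-1} of |Bx|^{-γ} dx equals (1/|det B|) times the integral over S^{n-1} of |B^{-1}x|^{-(n-γ)} dx. -/
/-!
The weight `w t = t · 1_{(1,2)}(t)` satisfies `∫₀^∞ w(t) dt / t = 1`, so in polar coordinates
every `(-n)`-homogeneous `F` on `ℝⁿ` has `∫_{S^{n-1}} F = ∫_{ℝⁿ} F(x) w(N x) dx` for any positive
`1`-homogeneous gauge `N`. Take `F(x) = |Bx|^{-γ} |x|^{γ-n}` and `N = |B ·|`: the substitution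
`y = Bx` turns the right side into `|det B|⁻¹ ∫ |B⁻¹y|^{γ-n} |y|^{-γ} w(|y|) dy`, which is
`|det B|⁻¹ ∫_{S^{n-1}} |B⁻¹ω|^{γ-n}` by the same identity with `N = |·|`.
-/

open MeasureTheory Metric Set Module
open scoped ENNReal

theorem norm_rpow_mul_norm_rpow_smul {E F : Type*} [NormedAddCommGroup E] [NormedSpace ℝ E]
    [NormedAddCommGroup F] [NormedSpace ℝ F] (f : E →ₗ[ℝ] F) (a b : ℝ) {r : ℝ} (hr : 0 < r)
    (x : E) :
    ‖f (r • x)‖ ^ (-a) * ‖r • x‖ ^ (-b) = r ^ (-(a + b)) * (‖f x‖ ^ (-a) * ‖x‖ ^ (-b)) := by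
  simp only [map_smul, norm_smul, Real.norm_of_nonneg hr.le,
    Real.mul_rpow hr.le (norm_nonneg _), neg_add, Real.rpow_add hr]
  ring

namespace MeasureTheory.Measure

theorem lintegral_volumeIoiPow_rpow_mul_indicator (k : ℕ) {c : ℝ} (hc : 0 < c) :
    ∫⁻ r : Ioi (0 : ℝ), ENNReal.ofReal ((r : ℝ) ^ (-((k : ℝ) + 1)) *
      (Ioo 1 2).indicator id ((r : ℝ) * c)) ∂volumeIoiPow k = 1 := by
  have hmeas : Measurable fun r : Ioi (0 : ℝ) =>
      ENNReal.ofReal ((r : ℝ) ^ (-((k : ℝ) + 1)) * (Ioo 1 2).indicator id ((r : ℝ) * c)) :=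
    ((measurable_subtype_coe.pow_const _).mul ((measurable_id.indicator measurableSet_Ioo).comp
      (measurable_subtype_coe.mul_const c))).ennreal_ofReal
  refine (lintegral_withDensity_eq_lintegral_mul _
      (measurable_subtype_coe.pow_const k).ennreal_ofReal hmeas).trans ?_
  refine (lintegral_subtype_comap measurableSet_Ioi
      (fun r : ℝ => ENNReal.ofReal (r ^ k) *
        ENNReal.ofReal (r ^ (-((k : ℝ) + 1)) * (Ioo 1 2).indicator id (r * c)))).trans ?_
  have hpt : EqOn (fun r : ℝ => ENNReal.ofReal (r ^ k) *
        ENNReal.ofReal (r ^ (-((k : ℝ) + 1)) * (Ioo 1 2).indicator id (r * c)))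
      ((Ioo (1 / c) (2 / c)).indicator fun _ => ENNReal.ofReal c) (Ioi 0) := by
    intro r (hr : 0 < r)
    dsimp only
    have hmem : r * c ∈ Ioo (1 : ℝ) 2 ↔ r ∈ Ioo (1 / c) (2 / c) := by
      simp only [mem_Ioo, div_lt_iff₀ hc, lt_div_iff₀ hc]
    by_cases h : r ∈ Ioo (1 / c) (2 / c)
    · have hrk : r ^ k * r ^ (-((k : ℝ) + 1)) * r = 1 := by
        rw [← Real.rpow_natCast, ← Real.rpow_add hr, ← Real.rpow_add_one hr.ne']
        simp
      rw [indicator_of_mem h, indicator_of_mem (hmem.2 h), ← ENNReal.ofReal_mul (by positivity),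
        id, ← mul_assoc, ← mul_assoc, hrk, one_mul]
    · rw [indicator_of_notMem h, indicator_of_notMem (mt hmem.1 h), mul_zero,
        ENNReal.ofReal_zero, mul_zero]
  have hsub : Ioo (1 / c) (2 / c) ⊆ Ioi 0 := fun r hr => lt_trans (by positivity) hr.1
  rw [setLIntegral_congr_fun measurableSet_Ioi hpt, lintegral_indicator measurableSet_Ioo,
    setLIntegral_const, restrict_apply measurableSet_Ioo, inter_eq_left.2 hsub,
    Real.volume_Ioo, ← ENNReal.ofReal_mul hc.le, show 2 / c - 1 / c = c⁻¹ by ring,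
    mul_inv_cancel₀ hc.ne', ENNReal.ofReal_one]

variable {E : Type*} [NormedAddCommGroup E] [NormedSpace ℝ E] [MeasurableSpace E]
  [BorelSpace E] [FiniteDimensional ℝ E] (μ : Measure E) [μ.IsAddHaarMeasure]

theorem lintegral_eq_lintegral_toSphere_prod [Nontrivial E] {G : E → ℝ≥0∞} (hG : Measurable G) :
    ∫⁻ x, G x ∂μ = ∫⁻ z : sphere (0 : E) 1 × Ioi (0 : ℝ), G ((z.2 : ℝ) • (z.1 : E))
      ∂(μ.toSphere.prod (volumeIoiPow (finrank ℝ E - 1))) := by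
  have hGsmul : Measurable fun z : sphere (0 : E) 1 × Ioi (0 : ℝ) => G ((z.2 : ℝ) • (z.1 : E)) :=
    hG.comp ((continuous_subtype_val.comp continuous_snd).smul
      (continuous_subtype_val.comp continuous_fst)).measurable
  conv_lhs => rw [← restrict_compl_singleton (μ := μ) 0,
    ← lintegral_subtype_comap (measurableSet_singleton _).compl]
  rw [← (μ.measurePreserving_homeomorphUnitSphereProd).lintegral_comp hGsmul]
  refine lintegral_congr fun x => congrArg G ?_
  simp only [homeomorphUnitSphereProd_apply_snd_coe, homeomorphUnitSphereProd_apply_fst_coe]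
  exact (smul_inv_smul₀ (norm_ne_zero_iff.2 x.2) _).symm

theorem lintegral_comp_linearEquiv (ℓ : E ≃ₗ[ℝ] E) (g : E → ℝ≥0∞) :
    ∫⁻ x, g (ℓ x) ∂μ = ENNReal.ofReal |(LinearMap.det (ℓ : E →ₗ[ℝ] E))⁻¹| * ∫⁻ x, g x ∂μ := by
  calc ∫⁻ x, g (ℓ x) ∂μ = ∫⁻ x, g x ∂(map (ℓ : E →ₗ[ℝ] E) μ) :=
        (lintegral_map_equiv g ℓ.toContinuousLinearEquiv.toHomeomorph.toMeasurableEquiv).symm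
    _ = _ := by
      rw [map_linearMap_addHaar_eq_smul_addHaar μ ℓ.isUnit_det'.ne_zero, lintegral_smul_measure,
        smul_eq_mul]

theorem lintegral_mul_indicator_eq_lintegral_toSphere [Nontrivial E] {F N : E → ℝ}
    (hF : Measurable F) (hN : Measurable N)
    (hF_hom : ∀ x, ∀ r : ℝ, 0 < r → F (r • x) = r ^ (-(finrank ℝ E : ℝ)) * F x)
    (hN_hom : ∀ x, ∀ r : ℝ, 0 < r → N (r • x) = r * N x) (hN_pos : ∀ x ≠ 0, 0 < N x) :
    ∫⁻ x, ENNReal.ofReal (F x * (Ioo 1 2).indicator id (N x)) ∂μ =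
      ∫⁻ ω : sphere (0 : E) 1, ENNReal.ofReal (F ω) ∂μ.toSphere := by
  have hd : (finrank ℝ E : ℝ) = ((finrank ℝ E - 1 : ℕ) : ℝ) + 1 := by
    rw [Nat.cast_pred finrank_pos, sub_add_cancel]
  have hG : Measurable fun x => ENNReal.ofReal (F x * (Ioo 1 2).indicator id (N x)) :=
    (hF.mul ((measurable_id.indicator measurableSet_Ioo).comp hN)).ennreal_ofReal
  have hGsmul : Measurable fun z : sphere (0 : E) 1 × Ioi (0 : ℝ) =>
      ENNReal.ofReal (F ((z.2 : ℝ) • (z.1 : E)) *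
        (Ioo 1 2).indicator id (N ((z.2 : ℝ) • (z.1 : E)))) :=
    hG.comp ((measurable_subtype_coe.comp measurable_snd).smul
      (measurable_subtype_coe.comp measurable_fst))
  rw [lintegral_eq_lintegral_toSphere_prod μ hG, lintegral_prod _ hGsmul.aemeasurable]
  refine lintegral_congr fun ω => ?_
  have hω : 0 < N ω := hN_pos ω (ne_of_mem_sphere ω.2 one_ne_zero)
  calc ∫⁻ r : Ioi (0 : ℝ), ENNReal.ofReal (F ((r : ℝ) • (ω : E)) *
          (Ioo 1 2).indicator id (N ((r : ℝ) • (ω : E)))) ∂volumeIoiPow (finrank ℝ E - 1)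
      = ∫⁻ r : Ioi (0 : ℝ), ENNReal.ofReal (F ω) * ENNReal.ofReal ((r : ℝ) ^
          (-(((finrank ℝ E - 1 : ℕ) : ℝ) + 1)) * (Ioo 1 2).indicator id ((r : ℝ) * N ω))
          ∂volumeIoiPow (finrank ℝ E - 1) := by
        refine lintegral_congr fun r => ?_
        have hind : 0 ≤ (Ioo 1 2).indicator id ((r : ℝ) * N ω) :=
          indicator_nonneg (fun t ht => (one_pos.trans ht.1).le) _
        rw [hF_hom _ _ r.2, hN_hom _ _ r.2, ← hd,
          ← ENNReal.ofReal_mul' (mul_nonneg (Real.rpow_nonneg (le_of_lt r.2) _) hind)]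
        ring_nf
    _ = ENNReal.ofReal (F ω) := by
        rw [lintegral_const_mul' _ _ ENNReal.ofReal_ne_top,
          lintegral_volumeIoiPow_rpow_mul_indicator _ hω, mul_one]

theorem lintegral_toSphere_norm_rpow_eq (ℓ : E ≃ₗ[ℝ] E) (γ : ℝ) :
    ∫⁻ ω : sphere (0 : E) 1, ENNReal.ofReal (‖ℓ ω‖ ^ (-γ)) ∂μ.toSphere =
      ENNReal.ofReal |(LinearMap.det (ℓ : E →ₗ[ℝ] E))⁻¹| *
        ∫⁻ ω : sphere (0 : E) 1, ENNReal.ofReal (‖ℓ.symm ω‖ ^ (-(finrank ℝ E - γ)))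
          ∂μ.toSphere := by
  rcases subsingleton_or_nontrivial E with hE | _
  · simp [(toSphere_eq_zero_iff μ).2 hE]
  set d : ℝ := (finrank ℝ E : ℝ)
  have hℓ : Continuous ℓ := ℓ.toLinearMap.continuous_of_finiteDimensional
  have hℓ_symm : Continuous ℓ.symm := ℓ.symm.toLinearMap.continuous_of_finiteDimensional
  have key := lintegral_mul_indicator_eq_lintegral_toSphere μ
    (F := fun x => ‖ℓ x‖ ^ (-γ) * ‖x‖ ^ (-(d - γ))) (N := fun x => ‖ℓ x‖)
    ((hℓ.measurable.norm.pow_const _).mul (measurable_norm.pow_const _)) hℓ.measurable.norm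
    (fun x r hr => (norm_rpow_mul_norm_rpow_smul ℓ.toLinearMap γ (d - γ) hr x).trans
      (by rw [add_sub_cancel]; rfl))
    (fun x r hr => by simp [norm_smul, abs_of_pos hr])
    (fun x hx => norm_pos_iff.2 (ℓ.map_ne_zero_iff.2 hx))
  have key_symm := lintegral_mul_indicator_eq_lintegral_toSphere μ
    (F := fun y => ‖ℓ.symm y‖ ^ (-(d - γ)) * ‖y‖ ^ (-γ)) (N := fun y => ‖y‖)
    ((hℓ_symm.measurable.norm.pow_const _).mul (measurable_norm.pow_const _)) measurable_norm
    (fun x r hr => (norm_rpow_mul_norm_rpow_smul ℓ.symm.toLinearMap (d - γ) γ hr x).trans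
      (by rw [sub_add_cancel]; rfl))
    (fun x r hr => by simp [norm_smul, abs_of_pos hr])
    (fun x hx => norm_pos_iff.2 hx)
  simp only [norm_eq_of_mem_sphere, Real.one_rpow, mul_one] at key key_symm
  rw [← key, ← key_symm, ← lintegral_comp_linearEquiv μ ℓ]
  simp only [LinearEquiv.symm_apply_apply, mul_comm]

end MeasureTheory.Measure

theorem integral_toSphere_norm_mulVec_rpow (n : ℕ) (M : Matrix (Fin n) (Fin n) ℝ) (δ : ℝ) :
    ∫ x : sphere (0 : EuclideanSpace ℝ (Fin n)) 1,
        ‖(EuclideanSpace.equiv (Fin n) ℝ).symm (M.mulVec (x : EuclideanSpace ℝ (Fin n)))‖ ^ (-δ)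
      ∂(volume : Measure (EuclideanSpace ℝ (Fin n))).toSphere =
    (∫⁻ x : sphere (0 : EuclideanSpace ℝ (Fin n)) 1,
        ENNReal.ofReal (‖Matrix.toLpLin 2 2 M x‖ ^ (-δ))
      ∂(volume : Measure (EuclideanSpace ℝ (Fin n))).toSphere).toReal := by
  have hM : Continuous (Matrix.toLpLin 2 2 M) := LinearMap.continuous_of_finiteDimensional _
  exact integral_eq_lintegral_of_nonneg_ae (.of_forall fun _ => by positivity)
    ((hM.comp continuous_subtype_val).norm.measurable.pow_const _).aestronglyMeasurable

/-- **Power-reducing formula.** For an invertible `n × n` real matrix `B` and any real `γ`,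
`∫_{S^{n-1}} |Bx|^{-γ} dx = (1 / |det B|) ∫_{S^{n-1}} |B⁻¹x|^{-(n-γ)} dx`,
where the sphere carries its standard surface measure. -/
theorem power_reducing_formula (n : ℕ) (B : Matrix (Fin n) (Fin n) ℝ)
    (hB : IsUnit B.det) (γ : ℝ) :
    ∫ x : sphere (0 : EuclideanSpace ℝ (Fin n)) 1,
        ‖(EuclideanSpace.equiv (Fin n) ℝ).symm (B.mulVec (x : EuclideanSpace ℝ (Fin n)))‖ ^ (-γ)
      ∂(volume : Measure (EuclideanSpace ℝ (Fin n))).toSphere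
    = (1 / |B.det|) *
      ∫ x : sphere (0 : EuclideanSpace ℝ (Fin n)) 1,
        ‖(EuclideanSpace.equiv (Fin n) ℝ).symm (B⁻¹.mulVec (x : EuclideanSpace ℝ (Fin n)))‖
          ^ (-((n : ℝ) - γ)) ∂(volume : Measure (EuclideanSpace ℝ (Fin n))).toSphere := by
  let ℓ : EuclideanSpace ℝ (Fin n) ≃ₗ[ℝ] EuclideanSpace ℝ (Fin n) :=
    .ofLinearMap (Matrix.toLpLin 2 2 B) (Matrix.toLpLin 2 2 B⁻¹)
      (by rw [← Matrix.toLpLin_mul_same, B.mul_nonsing_inv hB, Matrix.toLpLin_one])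
      (by rw [← Matrix.toLpLin_mul_same, B.nonsing_inv_mul hB, Matrix.toLpLin_one])
  have h := (volume : Measure (EuclideanSpace ℝ (Fin n))).lintegral_toSphere_norm_rpow_eq ℓ γ
  simp only [ℓ, LinearEquiv.coe_ofLinearMap, LinearEquiv.symm_ofLinearMap,
    LinearEquiv.toLinearMap_ofLinearMap, LinearMap.det_toLpLin, finrank_euclideanSpace_fin] at h
  rw [integral_toSphere_norm_mulVec_rpow, integral_toSphere_norm_mulVec_rpow, h,
    ENNReal.toReal_mul, ENNReal.toReal_ofReal (abs_nonneg _), abs_inv, one_div]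
end

section
/- Assume s_α ≥ s_l > 0. Then ∫_0^{π/2} (s_l^{-2} sin²t + s_α^{-2} cos²t)^{-1/2} dt is bounded above and below by positive absolute constant multiples of s_l·(1 + log(s_α/s_l)). -/
open Real

set_option maxHeartbeats 800000

private lemma rpow_neg_half_eq' {x : ℝ} (hx : 0 < x) :
    x ^ (-(1:ℝ)/2) = (Real.sqrt x)⁻¹ := by
  rw [show (-(1:ℝ)/2) = -(1/2) by ring, Real.rpow_neg hx.le, ← Real.sqrt_eq_rpow]

private lemma integral_inv_sqrt_sq_add' (r : ℝ) (hr : 0 < r) :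
    (∫ t in (0:ℝ)..1, (Real.sqrt (t ^ 2 + r ^ 2))⁻¹) = Real.arsinh (1 / r) := by
  have key : ∀ t : ℝ, HasDerivAt (fun u => Real.arsinh (u / r))
      ((Real.sqrt (t ^ 2 + r ^ 2))⁻¹) t := by
    intro t
    have h1 : HasDerivAt (fun u : ℝ => u / r) r⁻¹ t := by
      simpa using (hasDerivAt_id t).div_const r
    have h2 := (Real.hasDerivAt_arsinh (t / r)).comp t h1
    refine h2.congr_deriv (Eq.symm ?_)
    rw [← mul_inv]
    congr 1
    rw [← Real.sqrt_sq hr.le, ← Real.sqrt_mul (by positivity)]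
    congr 1
    field_simp
    rw [Real.sqrt_sq hr.le]
    ring
  have hcont : Continuous fun t : ℝ => (Real.sqrt (t ^ 2 + r ^ 2))⁻¹ := by
    apply Continuous.inv₀
    · exact Real.continuous_sqrt.comp (by continuity)
    · intro t
      exact ne_of_gt (Real.sqrt_pos.2 (by positivity))
  have := intervalIntegral.integral_eq_sub_of_hasDerivAt (fun t _ => key t)
      (hcont.intervalIntegrable 0 1)
  simpa using this

private lemma log_add_le_arsinh' {y : ℝ} (hy : 1 ≤ y) :
    Real.log 2 + Real.log y ≤ Real.arsinh y := by
  have hy0 : 0 < y := by linarith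
  have hs : y ≤ Real.sqrt (1 + y ^ 2) := by
    rw [show y = Real.sqrt (y ^ 2) by rw [Real.sqrt_sq hy0.le]]
    exact Real.sqrt_le_sqrt (by nlinarith [Real.sqrt_sq hy0.le])
  rw [← Real.log_mul two_ne_zero (ne_of_gt hy0)]
  unfold Real.arsinh
  exact Real.log_le_log (by positivity) (by nlinarith)

private lemma arsinh_le_two_add_log' {y : ℝ} (hy : 1 ≤ y) :
    Real.arsinh y ≤ 2 + Real.log y := by
  have hy0 : 0 < y := by linarith
  have hs : Real.sqrt (1 + y ^ 2) ≤ 1 + y := by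
    rw [show (1:ℝ) + y = Real.sqrt ((1 + y) ^ 2) by rw [Real.sqrt_sq (by linarith)]]
    exact Real.sqrt_le_sqrt (by nlinarith [Real.sqrt_sq (show (0:ℝ) ≤ 1 + y by linarith)])
  have h1 : Real.arsinh y ≤ Real.log (3 * y) := by
    unfold Real.arsinh
    exact Real.log_le_log (by positivity) (by nlinarith)
  have h2 : Real.log (3 * y) = Real.log 3 + Real.log y :=
    Real.log_mul (by norm_num) (ne_of_gt hy0)
  have h3 : Real.log 3 ≤ 2 := by
    have := Real.log_le_sub_one_of_pos (show (0:ℝ) < 3 by norm_num)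
    linarith
  linarith

/-- Elementary elliptic-type integral estimate: for `s_α ≥ s_l > 0`,
`∫₀^{π/2} dt/√(s_l⁻² sin²t + s_α⁻² cos²t)` is comparable to `s_l (1 + log(s_α/s_l))`
with positive absolute constants. -/
theorem elliptic_integral_estimate :
    ∃ c C : ℝ, 0 < c ∧ 0 < C ∧
      ∀ sα sl : ℝ, 0 < sl → sl ≤ sα →
        c * (sl * (1 + Real.log (sα / sl))) ≤
          (∫ t in (0:ℝ)..(π / 2),
            (sl ^ (-2 : ℝ) * Real.sin t ^ 2 + sα ^ (-2 : ℝ) * Real.cos t ^ 2) ^ (-(1:ℝ)/2)) ∧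
        (∫ t in (0:ℝ)..(π / 2),
            (sl ^ (-2 : ℝ) * Real.sin t ^ 2 + sα ^ (-2 : ℝ) * Real.cos t ^ 2) ^ (-(1:ℝ)/2)) ≤
          C * (sl * (1 + Real.log (sα / sl))) := by
  refine ⟨3/5, 8, by norm_num, by norm_num, ?_⟩
  intro sα sl hsl hle
  have hsα : 0 < sα := lt_of_lt_of_le hsl hle
  set r : ℝ := sl / sα with hrdef
  have hr0 : 0 < r := by positivity
  have hr1 : r ≤ 1 := by
    rw [hrdef, div_le_one hsα]; exact hle
  have hL0 : 0 ≤ Real.log (sα / sl) := Real.log_nonneg ((one_le_div hsl).2 hle)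
  have hy1 : 1 ≤ sα / sl := (one_le_div hsl).2 hle
  have hptA : ∀ t : ℝ, 0 < Real.sin t ^ 2 + r ^ 2 * Real.cos t ^ 2 := by
    intro t
    have h1 : Real.sin t ^ 2 + Real.cos t ^ 2 = 1 := Real.sin_sq_add_cos_sq t
    have h2 : 0 ≤ (1 - r ^ 2) * Real.sin t ^ 2 :=
      mul_nonneg (by nlinarith) (sq_nonneg _)
    nlinarith [mul_pos hr0 hr0]
  have hident : ∀ t : ℝ,
      (sl ^ (-2:ℝ) * Real.sin t ^ 2 + sα ^ (-2:ℝ) * Real.cos t ^ 2) ^ (-(1:ℝ)/2)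
        = sl * (Real.sqrt (Real.sin t ^ 2 + r ^ 2 * Real.cos t ^ 2))⁻¹ := by
    intro t
    have h2l : sl ^ (-2:ℝ) = (sl ^ 2)⁻¹ := by
      rw [show (-2:ℝ) = -((2:ℕ):ℝ) by norm_num, Real.rpow_neg hsl.le, Real.rpow_natCast]
    have h2a : sα ^ (-2:ℝ) = (sα ^ 2)⁻¹ := by
      rw [show (-2:ℝ) = -((2:ℕ):ℝ) by norm_num, Real.rpow_neg hsα.le, Real.rpow_natCast]
    have hbase : sl ^ (-2:ℝ) * Real.sin t ^ 2 + sα ^ (-2:ℝ) * Real.cos t ^ 2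
        = (sl ^ 2)⁻¹ * (Real.sin t ^ 2 + r ^ 2 * Real.cos t ^ 2) := by
      rw [h2l, h2a, hrdef]
      field_simp
    rw [hbase, rpow_neg_half_eq' (mul_pos (by positivity) (hptA t)),
      Real.sqrt_mul (by positivity), Real.sqrt_inv, Real.sqrt_sq hsl.le, mul_inv, inv_inv]
  have hcontA : Continuous fun t : ℝ => Real.sin t ^ 2 + r ^ 2 * Real.cos t ^ 2 := by
    continuity
  have hconth : Continuous fun t : ℝ => (Real.sqrt (Real.sin t ^ 2 + r ^ 2 * Real.cos t ^ 2))⁻¹ :=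
    (Real.continuous_sqrt.comp hcontA).inv₀ fun t => ne_of_gt (Real.sqrt_pos.2 (hptA t))
  have hcontk : Continuous fun t : ℝ => (Real.sqrt (t ^ 2 + r ^ 2))⁻¹ :=
    (Real.continuous_sqrt.comp (by continuity)).inv₀
      fun t => ne_of_gt (Real.sqrt_pos.2 (by positivity))
  have hint : (∫ t in (0:ℝ)..(π/2),
      (sl ^ (-2:ℝ) * Real.sin t ^ 2 + sα ^ (-2:ℝ) * Real.cos t ^ 2) ^ (-(1:ℝ)/2))
      = sl * ∫ t in (0:ℝ)..(π/2), (Real.sqrt (Real.sin t ^ 2 + r ^ 2 * Real.cos t ^ 2))⁻¹ := by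
    rw [← intervalIntegral.integral_const_mul]
    exact intervalIntegral.integral_congr fun t _ => hident t
  have hpi1 : (1:ℝ) ≤ π/2 := by linarith [Real.pi_gt_three]
  have hpi4 : π ≤ 4 := Real.pi_le_four
  have hpi0 : 0 < π := Real.pi_pos
  have hsplit : (∫ t in (0:ℝ)..(π/2), (Real.sqrt (Real.sin t ^ 2 + r ^ 2 * Real.cos t ^ 2))⁻¹)
      = (∫ t in (0:ℝ)..1, (Real.sqrt (Real.sin t ^ 2 + r ^ 2 * Real.cos t ^ 2))⁻¹)
        + ∫ t in (1:ℝ)..(π/2), (Real.sqrt (Real.sin t ^ 2 + r ^ 2 * Real.cos t ^ 2))⁻¹ :=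
    (intervalIntegral.integral_add_adjacent_intervals (hconth.intervalIntegrable 0 1)
      (hconth.intervalIntegrable 1 (π/2))).symm
  have harsinh : Real.arsinh (1 / r) = Real.arsinh (sα / sl) := by
    rw [hrdef, one_div, inv_div]
  -- lower bound
  have hlow1 : (∫ t in (0:ℝ)..1, (Real.sqrt (t ^ 2 + r ^ 2))⁻¹)
      ≤ ∫ t in (0:ℝ)..1, (Real.sqrt (Real.sin t ^ 2 + r ^ 2 * Real.cos t ^ 2))⁻¹ := by
    apply intervalIntegral.integral_mono_on (by norm_num) (hcontk.intervalIntegrable 0 1)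
      (hconth.intervalIntegrable 0 1)
    intro t ht
    obtain ⟨ht0, ht1⟩ := ht
    have hsin : Real.sin t ^ 2 ≤ t ^ 2 := by
      have h1 : Real.sin t ≤ t := Real.sin_le ht0
      have h2 : 0 ≤ Real.sin t := Real.sin_nonneg_of_nonneg_of_le_pi ht0 (by linarith)
      nlinarith
    have hcos : r ^ 2 * Real.cos t ^ 2 ≤ r ^ 2 := by
      nlinarith [Real.cos_sq_le_one t, sq_nonneg r]
    exact inv_anti₀ (Real.sqrt_pos.2 (hptA t)) (Real.sqrt_le_sqrt (by linarith))
  have hlow2 : (0:ℝ) ≤ ∫ t in (1:ℝ)..(π/2), (Real.sqrt (Real.sin t ^ 2 + r ^ 2 * Real.cos t ^ 2))⁻¹ := by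
    apply intervalIntegral.integral_nonneg hpi1
    intro u _
    positivity
  have hJlow : Real.log 2 + Real.log (sα / sl)
      ≤ ∫ t in (0:ℝ)..(π/2), (Real.sqrt (Real.sin t ^ 2 + r ^ 2 * Real.cos t ^ 2))⁻¹ := by
    rw [hsplit]
    have h1 := integral_inv_sqrt_sq_add' r hr0
    have h2 := log_add_le_arsinh' hy1
    rw [harsinh] at h1
    linarith
  -- upper bound
  have hup1 : (∫ t in (0:ℝ)..1, (Real.sqrt (Real.sin t ^ 2 + r ^ 2 * Real.cos t ^ 2))⁻¹)
      ≤ ∫ t in (0:ℝ)..1, 2 * (Real.sqrt (t ^ 2 + r ^ 2))⁻¹ := by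
    apply intervalIntegral.integral_mono_on (by norm_num) (hconth.intervalIntegrable 0 1)
      ((continuous_const.mul hcontk).intervalIntegrable 0 1)
    intro t ht
    obtain ⟨ht0, ht1⟩ := ht
    have hsin : t ^ 2 / 4 ≤ Real.sin t ^ 2 := by
      have h1 : 2 / π * t ≤ Real.sin t := Real.mul_le_sin ht0 (by linarith)
      have h2 : 0 ≤ 2 / π * t := by positivity
      have h3 : t / 2 ≤ 2 / π * t := by
        rw [div_mul_eq_mul_div, le_div_iff₀ hpi0]
        nlinarith [mul_nonneg ht0 (show (0:ℝ) ≤ 4 - π by linarith)]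
      nlinarith
    have hcos : r ^ 2 / 4 ≤ r ^ 2 * Real.cos t ^ 2 := by
      have h1 : 1 - t ^ 2 / 2 ≤ Real.cos t := Real.one_sub_sq_div_two_le_cos
      have h2 : (1:ℝ)/2 ≤ Real.cos t := by nlinarith
      have h4 : (1:ℝ)/4 ≤ Real.cos t ^ 2 := by nlinarith
      nlinarith [mul_nonneg (sq_nonneg r) (show (0:ℝ) ≤ Real.cos t ^ 2 - 1/4 by linarith)]
    have hkey : Real.sqrt (t ^ 2 + r ^ 2)
        ≤ 2 * Real.sqrt (Real.sin t ^ 2 + r ^ 2 * Real.cos t ^ 2) := by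
      have hle4 : t ^ 2 + r ^ 2 ≤ 4 * (Real.sin t ^ 2 + r ^ 2 * Real.cos t ^ 2) := by
        nlinarith
      calc Real.sqrt (t ^ 2 + r ^ 2)
          ≤ Real.sqrt (4 * (Real.sin t ^ 2 + r ^ 2 * Real.cos t ^ 2)) :=
            Real.sqrt_le_sqrt hle4
        _ = 2 * Real.sqrt (Real.sin t ^ 2 + r ^ 2 * Real.cos t ^ 2) := by
            rw [show (4:ℝ) * (Real.sin t ^ 2 + r ^ 2 * Real.cos t ^ 2)
                = 2 ^ 2 * (Real.sin t ^ 2 + r ^ 2 * Real.cos t ^ 2) by ring,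
              Real.sqrt_mul (by norm_num : (0:ℝ) ≤ 2 ^ 2),
              Real.sqrt_sq (by norm_num : (0:ℝ) ≤ 2)]
    have hBpos : 0 < Real.sqrt (t ^ 2 + r ^ 2) := Real.sqrt_pos.2 (by positivity)
    show _ ≤ 2 * (Real.sqrt (t ^ 2 + r ^ 2))⁻¹
    rw [show (2:ℝ) * (Real.sqrt (t ^ 2 + r ^ 2))⁻¹ = (Real.sqrt (t ^ 2 + r ^ 2) / 2)⁻¹ by
      field_simp]
    exact inv_anti₀ (by positivity) (by linarith)
  have hup1' : (∫ t in (0:ℝ)..1, 2 * (Real.sqrt (t ^ 2 + r ^ 2))⁻¹)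
      = 2 * Real.arsinh (sα / sl) := by
    rw [intervalIntegral.integral_const_mul, integral_inv_sqrt_sq_add' r hr0, harsinh]
  have hup2 : (∫ t in (1:ℝ)..(π/2), (Real.sqrt (Real.sin t ^ 2 + r ^ 2 * Real.cos t ^ 2))⁻¹)
      ≤ 2 := by
    have hmono : (∫ t in (1:ℝ)..(π/2), (Real.sqrt (Real.sin t ^ 2 + r ^ 2 * Real.cos t ^ 2))⁻¹)
        ≤ ∫ _t in (1:ℝ)..(π/2), (2:ℝ) := by
      apply intervalIntegral.integral_mono_on hpi1 (hconth.intervalIntegrable 1 (π/2))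
        intervalIntegrable_const
      intro t ht
      obtain ⟨ht1, ht2⟩ := ht
      have hs : (1:ℝ)/2 ≤ Real.sin t := by
        have h1 : 2 / π * t ≤ Real.sin t := Real.mul_le_sin (by linarith) ht2
        have h2 : (1:ℝ)/2 ≤ 2 / π * t := by
          rw [div_mul_eq_mul_div, le_div_iff₀ hpi0]
          nlinarith
        linarith
      have hA : (1:ℝ)/4 ≤ Real.sin t ^ 2 + r ^ 2 * Real.cos t ^ 2 := by
        nlinarith [mul_nonneg (sq_nonneg r) (sq_nonneg (Real.cos t))]
      have hsq : (1:ℝ)/2 ≤ Real.sqrt (Real.sin t ^ 2 + r ^ 2 * Real.cos t ^ 2) := by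
        have := Real.sqrt_le_sqrt hA
        rwa [show (1:ℝ)/4 = (1/2 : ℝ) ^ 2 by norm_num,
          Real.sqrt_sq (by norm_num : (0:ℝ) ≤ 1/2)] at this
      rw [show (2:ℝ) = ((1:ℝ)/2)⁻¹ by norm_num]
      exact inv_anti₀ (by norm_num) hsq
    rw [intervalIntegral.integral_const, smul_eq_mul] at hmono
    nlinarith
  have hJup : (∫ t in (0:ℝ)..(π/2), (Real.sqrt (Real.sin t ^ 2 + r ^ 2 * Real.cos t ^ 2))⁻¹)
      ≤ 6 + 2 * Real.log (sα / sl) := by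
    rw [hsplit]
    have h1 := hup1.trans_eq hup1'
    have h2 := arsinh_le_two_add_log' hy1
    linarith
  rw [hint]
  constructor
  · calc (3/5 : ℝ) * (sl * (1 + Real.log (sα / sl)))
        = sl * ((3/5) * (1 + Real.log (sα / sl))) := by ring
    _ ≤ sl * (Real.log 2 + Real.log (sα / sl)) := by
        have := Real.log_two_gt_d9
        have : (3/5:ℝ) * (1 + Real.log (sα / sl)) ≤ Real.log 2 + Real.log (sα / sl) := by
          nlinarith [Real.log_two_gt_d9]
        nlinarith
    _ ≤ sl * ∫ t in (0:ℝ)..(π/2), (Real.sqrt (Real.sin t ^ 2 + r ^ 2 * Real.cos t ^ 2))⁻¹ :=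
        mul_le_mul_of_nonneg_left hJlow hsl.le
  · calc sl * (∫ t in (0:ℝ)..(π/2), (Real.sqrt (Real.sin t ^ 2 + r ^ 2 * Real.cos t ^ 2))⁻¹)
        ≤ sl * (6 + 2 * Real.log (sα / sl)) := mul_le_mul_of_nonneg_left hJup hsl.le
    _ ≤ 8 * (sl * (1 + Real.log (sα / sl))) := by nlinarith
end

section
/- Let q < 0, let Q be a star body in ℝ^n (radial function ρ_Q positive and continuous), and let K be a convex body in ℝ^n containing the origin in its interior. Define Ṽ_q(K,Q) = (1/n)∫_{S^{n-1}} ρ_K(u)^q ρ_Q(u)^{n-q} du. Then there exist positive constants c, C depending only on n, q, min ρ_Q, max ρ_Q such that c·(min_{S^{n-1}} ρ_K)^q ≤ Ṽ_q(K,Q) ≤ C·(min_{S^{n-1}} ρ_K)^q. -/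
/-!
Let `m = ρ_K(u₀)` be the minimum of `ρ_K` on the sphere. Since `ρ_K ≥ m` and `q < 0`, the upper
bound follows by integrating `ρ_K^q ρ_Q^(n-q) ≤ m^q (max ρ_Q)^(n-q)`. For the lower bound, a
supporting hyperplane of `K` at the boundary point `m u₀` has a unit normal `w` with `⟪w, y⟫ ≤ m`
on `K`, so `ρ_K ≤ 2m` on the spherical ball of radius `1` around `w`, where `⟪w, u⟫ > 1/2`. That
ball has measure at least a constant depending only on `n`.
-/

open Metric MeasureTheory

/-- The radial function `ρ_K(u) = max{λ > 0 : λu ∈ K}`. -/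
noncomputable def radFn {n : ℕ} (K : Set (EuclideanSpace ℝ (Fin n)))
    (u : EuclideanSpace ℝ (Fin n)) : ℝ :=
  sSup {r : ℝ | 0 < r ∧ r • u ∈ K}

open scoped RealInnerProductSpace

theorem mem_iff_gauge_le_one {E : Type*} [NormedAddCommGroup E] [NormedSpace ℝ E] {K : Set E}
    {x : E} (hKc : Convex ℝ K) (hKcl : IsClosed K) (hK0 : K ∈ nhds 0) :
    x ∈ K ↔ gauge K x ≤ 1 := by
  rw [gauge_le_one_iff_mem_closure hKc hK0, hKcl.closure_eq]

theorem gauge_pos_of_isCompact {E : Type*} [NormedAddCommGroup E] [NormedSpace ℝ E] {K : Set E}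
    {x : E} (hKb : IsCompact K) (hK0 : K ∈ nhds 0) (hx : x ≠ 0) : 0 < gauge K x :=
  (gauge_pos (absorbent_nhds_zero hK0) ((NormedSpace.isVonNBounded_iff ℝ).2 hKb.isBounded)).2 hx

theorem sphere_subset_compl_zero {E : Type*} [NormedAddCommGroup E] :
    sphere (0 : E) 1 ⊆ {0}ᶜ := fun u hu => ne_zero_of_mem_unit_sphere ⟨u, hu⟩

theorem exists_pos_le_toSphere_real_ball {E : Type*} [NormedAddCommGroup E] [NormedSpace ℝ E]
    [MeasurableSpace E] [BorelSpace E] [FiniteDimensional ℝ E] (μ : Measure E)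
    [μ.IsAddHaarMeasure] {ε : ℝ} (hε : 0 < ε) :
    ∃ κ > 0, ∀ x : sphere (0 : E) 1, κ ≤ μ.toSphere.real (ball x ε) :=
  ⟨_, mul_pos (Measure.toSphereBallBound_pos _ _)
    (ENNReal.toReal_pos (measure_ball_pos _ _ one_pos).ne' measure_ball_lt_top.ne),
    Measure.toSphereBallBound_mul_measureReal_unitBall_le_toSphere_ball μ hε⟩

theorem exists_unit_inner_le_of_notMem_interior {E : Type*} [NormedAddCommGroup E]
    [InnerProductSpace ℝ E] [CompleteSpace E] {A : Set E} {x : E} (hA : Convex ℝ A)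
    (hxA : x ∉ interior A) (hAint : (interior A).Nonempty) :
    ∃ w : E, ‖w‖ = 1 ∧ ∀ a ∈ A, ⟪w, a⟫ ≤ ⟪w, x⟫ := by
  obtain ⟨f, hf0, hfA⟩ := geometric_hahn_banach_of_nonempty_interior_point hA hxA hAint
  set v := (InnerProductSpace.toDual ℝ E).symm f
  have hv : ‖v‖ ≠ 0 := by simpa [v] using hf0
  have hinner (y : E) : ⟪‖v‖⁻¹ • v, y⟫ = ‖v‖⁻¹ * f y := by
    rw [real_inner_smul_left, InnerProductSpace.toDual_symm_apply]
  refine ⟨‖v‖⁻¹ • v, by simp [norm_smul, hv], fun a ha => ?_⟩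
  rw [hinner, hinner]
  exact mul_le_mul_of_nonneg_left (hfA a ha) (by positivity)

theorem half_lt_inner_of_dist_lt_one {E : Type*} [NormedAddCommGroup E]
    [InnerProductSpace ℝ E] {u w : E} (hu : ‖u‖ = 1) (hw : ‖w‖ = 1) (huw : dist u w < 1) :
    1 / 2 < ⟪w, u⟫ := by
  have h := norm_sub_sq_real u w
  rw [← dist_eq_norm, hu, hw, real_inner_comm] at h
  nlinarith [dist_nonneg (x := u) (y := w)]

section RadialFunction

variable {n : ℕ} {K : Set (EuclideanSpace ℝ (Fin n))} {u : EuclideanSpace ℝ (Fin n)}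

theorem radFn_le_div_of_inner_le {w : EuclideanSpace ℝ (Fin n)} {h t : ℝ} (hh : 0 ≤ h)
    (ht : 0 < t) (hK : ∀ y ∈ K, ⟪w, y⟫ ≤ h) (hu : t ≤ ⟪w, u⟫) : radFn K u ≤ h / t := by
  refine Real.sSup_le (fun r ⟨hr, hru⟩ => ?_) (div_nonneg hh ht.le)
  rw [le_div_iff₀ ht]
  calc r * t ≤ r * ⟪w, u⟫ := mul_le_mul_of_nonneg_left hu hr.le
    _ = ⟪w, r • u⟫ := (real_inner_smul_right _ _ _).symm
    _ ≤ h := hK _ hru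

theorem radFn_eq_inv_gauge (hKc : Convex ℝ K) (hKb : IsCompact K) (hK0 : K ∈ nhds 0)
    (hu : u ≠ 0) : radFn K u = (gauge K u)⁻¹ := by
  have hg := gauge_pos_of_isCompact hKb hK0 hu
  have hset : {r : ℝ | 0 < r ∧ r • u ∈ K} = Set.Ioc 0 (gauge K u)⁻¹ := by
    ext r
    refine and_congr_right fun hr => ?_
    rw [mem_iff_gauge_le_one hKc hKb.isClosed hK0, gauge_smul_of_nonneg hr.le, smul_eq_mul,
      ← one_div, le_div_iff₀ hg]
  rw [radFn, hset, csSup_Ioc (inv_pos.2 hg)]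

theorem radFn_pos (hKc : Convex ℝ K) (hKb : IsCompact K) (hK0 : K ∈ nhds 0) (hu : u ≠ 0) :
    0 < radFn K u := by
  rw [radFn_eq_inv_gauge hKc hKb hK0 hu]
  exact inv_pos.2 (gauge_pos_of_isCompact hKb hK0 hu)

theorem radFn_smul_notMem_interior (hKc : Convex ℝ K) (hKb : IsCompact K) (hK0 : K ∈ nhds 0)
    (hu : u ≠ 0) : radFn K u • u ∉ interior K := by
  have hg := gauge_pos_of_isCompact hKb hK0 hu
  rw [← gauge_lt_one_iff_mem_interior hKc hK0, radFn_eq_inv_gauge hKc hKb hK0 hu,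
    gauge_smul_of_nonneg (inv_pos.2 hg).le, smul_eq_mul, inv_mul_cancel₀ hg.ne']
  exact lt_irrefl 1

theorem continuousOn_radFn (hKc : Convex ℝ K) (hKb : IsCompact K) (hK0 : K ∈ nhds 0) :
    ContinuousOn (radFn K) {0}ᶜ :=
  ((continuous_gauge hKc hK0).continuousOn.inv₀ fun _ hu =>
    (gauge_pos_of_isCompact hKb hK0 hu).ne').congr fun _ hu => radFn_eq_inv_gauge hKc hKb hK0 hu

theorem exists_radFn_eq_sInf_sphere [NeZero n] (hKc : Convex ℝ K) (hKb : IsCompact K)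
    (hK0 : K ∈ nhds 0) : ∃ u₀ ∈ sphere (0 : EuclideanSpace ℝ (Fin n)) 1,
      sInf (radFn K '' sphere 0 1) = radFn K u₀ ∧ ∀ u ∈ sphere 0 1, radFn K u₀ ≤ radFn K u := by
  obtain ⟨u₀, hu₀, hmin⟩ := (isCompact_sphere 0 1).exists_isMinOn
    (NormedSpace.sphere_nonempty.2 zero_le_one)
    ((continuousOn_radFn hKc hKb hK0).mono sphere_subset_compl_zero)
  exact ⟨u₀, hu₀, IsLeast.csInf_eq ⟨⟨u₀, hu₀, rfl⟩, by rintro _ ⟨u, hu, rfl⟩; exact hmin hu⟩, hmin⟩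

theorem exists_radFn_le_two_mul_on_ball (hKc : Convex ℝ K) (hKb : IsCompact K)
    (hK0 : K ∈ nhds 0) {u₀ : EuclideanSpace ℝ (Fin n)} (hu₀ : u₀ ∈ sphere 0 1) :
    ∃ w : sphere (0 : EuclideanSpace ℝ (Fin n)) 1,
      ∀ u ∈ ball w 1, radFn K (u : EuclideanSpace ℝ (Fin n)) ≤ 2 * radFn K u₀ := by
  have hu₀0 := sphere_subset_compl_zero hu₀
  obtain ⟨w, hw, hwK⟩ := exists_unit_inner_le_of_notMem_interior hKc
    (radFn_smul_notMem_interior hKc hKb hK0 hu₀0) ⟨0, mem_interior_iff_mem_nhds.2 hK0⟩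
  have hsupp (y) (hy : y ∈ K) : ⟪w, y⟫ ≤ radFn K u₀ := by
    calc ⟪w, y⟫ ≤ ⟪w, radFn K u₀ • u₀⟫ := hwK y hy
      _ ≤ ‖w‖ * ‖radFn K u₀ • u₀‖ := real_inner_le_norm _ _
      _ = radFn K u₀ := by
        rw [hw, norm_smul, mem_sphere_zero_iff_norm.1 hu₀, Real.norm_of_nonneg
          (radFn_pos hKc hKb hK0 hu₀0).le, one_mul, mul_one]
  refine ⟨⟨w, mem_sphere_zero_iff_norm.2 hw⟩, fun u hu => ?_⟩
  have hinner := half_lt_inner_of_dist_lt_one (norm_eq_of_mem_sphere u) hw hu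
  calc radFn K u ≤ radFn K u₀ / (1 / 2) :=
        radFn_le_div_of_inner_le (radFn_pos hKc hKb hK0 hu₀0).le one_half_pos hsupp hinner.le
    _ = 2 * radFn K u₀ := by ring

end RadialFunction

section SphereIntegral

variable {n : ℕ} {K : Set (EuclideanSpace ℝ (Fin n))} {ρ : EuclideanSpace ℝ (Fin n) → ℝ}
  {q s : ℝ} {μ : Measure (sphere (0 : EuclideanSpace ℝ (Fin n)) 1)} [IsFiniteMeasure μ]

theorem integrable_radFn_rpow_mul_rpow (hKc : Convex ℝ K) (hKb : IsCompact K) (hK0 : K ∈ nhds 0)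
    (hρ : ContinuousOn ρ (sphere 0 1)) (hs : 0 ≤ s) :
    Integrable (fun u : sphere (0 : EuclideanSpace ℝ (Fin n)) 1 => radFn K u ^ q * ρ u ^ s) μ := by
  have hrad : Continuous fun u : sphere (0 : EuclideanSpace ℝ (Fin n)) 1 => radFn K u :=
    ((continuousOn_radFn hKc hKb hK0).mono sphere_subset_compl_zero).domRestrict
  refine Continuous.integrable_of_hasCompactSupport ?_ (HasCompactSupport.of_compactSpace _)
  exact (hrad.rpow_const fun u => Or.inl (radFn_pos hKc hKb hK0
    (sphere_subset_compl_zero u.2)).ne').mul (hρ.domRestrict.rpow_const fun _ => Or.inr hs)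

theorem integral_radFn_rpow_mul_rpow_le (hKc : Convex ℝ K) (hKb : IsCompact K)
    (hK0 : K ∈ nhds 0) (hρ : ContinuousOn ρ (sphere 0 1)) (hq : q ≤ 0) (hs : 0 ≤ s)
    {m M : ℝ} (hm : 0 < m) (hmK : ∀ u ∈ sphere 0 1, m ≤ radFn K u)
    (hρM : ∀ u ∈ sphere 0 1, 0 ≤ ρ u ∧ ρ u ≤ M) :
    ∫ u, radFn K u ^ q * ρ u ^ s ∂μ ≤ μ.real Set.univ * M ^ s * m ^ q := by
  have hbound (u : sphere (0 : EuclideanSpace ℝ (Fin n)) 1) :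
      radFn K u ^ q * ρ u ^ s ≤ m ^ q * M ^ s :=
    mul_le_mul (Real.rpow_le_rpow_of_nonpos hm (hmK u u.2) hq)
      (Real.rpow_le_rpow (hρM u u.2).1 (hρM u u.2).2 hs)
      (Real.rpow_nonneg (hρM u u.2).1 _) (Real.rpow_nonneg hm.le _)
  calc ∫ u, radFn K u ^ q * ρ u ^ s ∂μ ≤ ∫ _, m ^ q * M ^ s ∂μ :=
        integral_mono (integrable_radFn_rpow_mul_rpow hKc hKb hK0 hρ hs) (integrable_const _) hbound
    _ = μ.real Set.univ * M ^ s * m ^ q := by rw [integral_const, smul_eq_mul]; ring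

theorem le_integral_radFn_rpow_mul_rpow (hKc : Convex ℝ K) (hKb : IsCompact K)
    (hK0 : K ∈ nhds 0) (hρ : ContinuousOn ρ (sphere 0 1)) (hq : q ≤ 0) (hs : 0 ≤ s)
    {S : Set (sphere (0 : EuclideanSpace ℝ (Fin n)) 1)} (hS : MeasurableSet S) {R m : ℝ}
    (hRK : ∀ u ∈ S, radFn K u ≤ R) (hm : 0 ≤ m) (hmρ : ∀ u ∈ sphere 0 1, m ≤ ρ u) :
    μ.real S * m ^ s * R ^ q ≤ ∫ u, radFn K u ^ q * ρ u ^ s ∂μ := by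
  have hrad (u : sphere (0 : EuclideanSpace ℝ (Fin n)) 1) : 0 < radFn K u :=
    radFn_pos hKc hKb hK0 (sphere_subset_compl_zero u.2)
  have hint := integrable_radFn_rpow_mul_rpow (μ := μ) (q := q) hKc hKb hK0 hρ hs
  have hbound (u) (hu : u ∈ S) : R ^ q * m ^ s ≤ radFn K u ^ q * ρ u ^ s :=
    mul_le_mul (Real.rpow_le_rpow_of_nonpos (hrad u) (hRK u hu) hq)
      (Real.rpow_le_rpow hm (hmρ u u.2) hs) (Real.rpow_nonneg hm _)
      (Real.rpow_nonneg (hrad u).le _)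
  calc μ.real S * m ^ s * R ^ q = R ^ q * m ^ s * μ.real S := by ring
    _ ≤ ∫ u in S, radFn K u ^ q * ρ u ^ s ∂μ :=
        setIntegral_ge_of_const_le_real hS (measure_ne_top μ S) hbound hint.integrableOn
    _ ≤ ∫ u, radFn K u ^ q * ρ u ^ s ∂μ :=
        setIntegral_le_integral hint (Filter.Eventually.of_forall fun u =>
          mul_nonneg (Real.rpow_nonneg (hrad u).le _) (Real.rpow_nonneg (hm.trans (hmρ u u.2)) _))

end SphereIntegral

/-- Sharp estimate of the `q`-th dual mixed volume for `q < 0`: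
`Ṽ_q(K,Q) ≈ (min ρ_K)^q`, with constants depending only on `n`, `q`, `min ρ_Q`, `max ρ_Q`. -/
theorem dual_mixed_volume_estimate_neg (n : ℕ) (hn : 0 < n) (q : ℝ) (hq : q < 0)
    (ρmin ρmax : ℝ) (hρmin : 0 < ρmin) (hρ : ρmin ≤ ρmax) :
    ∃ c C : ℝ, 0 < c ∧ 0 < C ∧
      ∀ ρQ : EuclideanSpace ℝ (Fin n) → ℝ, ContinuousOn ρQ (sphere 0 1) →
        (∀ u ∈ sphere (0 : EuclideanSpace ℝ (Fin n)) 1, ρmin ≤ ρQ u ∧ ρQ u ≤ ρmax) →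
      ∀ K : Set (EuclideanSpace ℝ (Fin n)), Convex ℝ K → IsCompact K →
        (0 : EuclideanSpace ℝ (Fin n)) ∈ interior K →
        c * sInf (radFn K '' sphere (0 : EuclideanSpace ℝ (Fin n)) 1) ^ q ≤
          ((1 : ℝ) / n) * (∫ u : sphere (0 : EuclideanSpace ℝ (Fin n)) 1,
            radFn K (u : EuclideanSpace ℝ (Fin n)) ^ q *
              ρQ (u : EuclideanSpace ℝ (Fin n)) ^ ((n : ℝ) - q)
            ∂(volume : Measure (EuclideanSpace ℝ (Fin n))).toSphere) ∧
        ((1 : ℝ) / n) * (∫ u : sphere (0 : EuclideanSpace ℝ (Fin n)) 1,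
            radFn K (u : EuclideanSpace ℝ (Fin n)) ^ q *
              ρQ (u : EuclideanSpace ℝ (Fin n)) ^ ((n : ℝ) - q)
            ∂(volume : Measure (EuclideanSpace ℝ (Fin n))).toSphere) ≤
          C * sInf (radFn K '' sphere (0 : EuclideanSpace ℝ (Fin n)) 1) ^ q := by
  have : NeZero n := ⟨hn.ne'⟩
  obtain ⟨κ, hκ, hball⟩ :=
    exists_pos_le_toSphere_real_ball (volume : Measure (EuclideanSpace ℝ (Fin n))) one_pos
  set σ := (volume : Measure (EuclideanSpace ℝ (Fin n))).toSphere
  have : NeZero σ := ⟨Measure.toSphere_ne_zero _⟩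
  have hσ : 0 < σ.real Set.univ := measureReal_univ_pos
  have hs : 0 ≤ (n : ℝ) - q := by linarith [(Nat.cast_nonneg n : (0 : ℝ) ≤ n)]
  refine ⟨(1 / n) * 2 ^ q * ρmin ^ ((n : ℝ) - q) * κ,
    (1 / n) * ρmax ^ ((n : ℝ) - q) * σ.real Set.univ, by positivity,
    by have := hρmin.trans_le hρ; positivity, ?_⟩
  intro ρQ hρQc hρQ K hKc hKb h0
  have hK0 := mem_interior_iff_mem_nhds.1 h0
  obtain ⟨u₀, hu₀, hm, hmin⟩ := exists_radFn_eq_sInf_sphere hKc hKb hK0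
  obtain ⟨w, hw⟩ := exists_radFn_le_two_mul_on_ball hKc hKb hK0 hu₀
  have hm0 := radFn_pos hKc hKb hK0 (sphere_subset_compl_zero hu₀)
  rw [hm]
  constructor
  · have hlow := le_integral_radFn_rpow_mul_rpow (μ := σ) hKc hKb hK0 hρQc hq.le hs
      measurableSet_ball hw hρmin.le fun u hu => (hρQ u hu).1
    rw [Real.mul_rpow two_pos.le hm0.le] at hlow
    calc 1 / (n : ℝ) * 2 ^ q * ρmin ^ ((n : ℝ) - q) * κ * radFn K u₀ ^ q
        = 1 / n * (κ * ρmin ^ ((n : ℝ) - q) * (2 ^ q * radFn K u₀ ^ q)) := by ring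
      _ ≤ 1 / n * (σ.real (ball w 1) * ρmin ^ ((n : ℝ) - q) * (2 ^ q * radFn K u₀ ^ q)) := by
        gcongr
        exact hball w
      _ ≤ _ := by gcongr
  · have hup := integral_radFn_rpow_mul_rpow_le (μ := σ) hKc hKb hK0 hρQc hq.le hs hm0 hmin
      fun u hu => ⟨hρmin.le.trans (hρQ u hu).1, (hρQ u hu).2⟩
    calc 1 / (n : ℝ) * _ ≤ 1 / n * (σ.real Set.univ * ρmax ^ ((n : ℝ) - q) * radFn K u₀ ^ q) := by
          gcongr
      _ = _ := by ring
end

section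
/- Let q < 0 and let K be a convex body in ℝ^n containing the origin in its interior, with r = min_{S^{n-1}} ρ_K. Then there exist positive constants c_{n,q}, C_{n,q} depending only on n and q such that c_{n,q}·r^q ≤ ∫_{S^{n-1}} ρ_K(u)^q du ≤ C_{n,q}·r^q. -/
open Metric MeasureTheory

open scoped RealInnerProductSpace Pointwise

set_option maxHeartbeats 1000000



section Aux

variable {n : ℕ} {K : Set (EuclideanSpace ℝ (Fin n))}

local notation "E" => EuclideanSpace ℝ (Fin n)

lemma radFn_basic (hK : Convex ℝ K) (hc : IsCompact K) (h0 : (0 : E) ∈ interior K)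
    {u : E} (hu : ‖u‖ = 1) :
    0 < radFn K u ∧ radFn K u • u ∈ K ∧ ∀ t : ℝ, 0 < t → t • u ∈ K → t ≤ radFn K u := by
  obtain ⟨R, hR⟩ := hc.isBounded.subset_closedBall 0
  obtain ⟨ε, hε, hball⟩ := Metric.mem_nhds_iff.mp (mem_interior_iff_mem_nhds.mp h0)
  have hmem : ε / 2 ∈ {r : ℝ | 0 < r ∧ r • u ∈ K} := by
    refine ⟨by positivity, hball ?_⟩
    rw [mem_ball_zero_iff, norm_smul, hu, mul_one, Real.norm_eq_abs, abs_of_pos (by positivity)]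
    linarith
  have hbdd : BddAbove {r : ℝ | 0 < r ∧ r • u ∈ K} := by
    refine ⟨R, fun t ht => ?_⟩
    have := hR ht.2
    rw [mem_closedBall_zero_iff, norm_smul, hu, mul_one, Real.norm_eq_abs, abs_of_pos ht.1] at this
    exact this
  have hle : ∀ t : ℝ, 0 < t → t • u ∈ K → t ≤ radFn K u := fun t h1 h2 =>
    le_csSup hbdd ⟨h1, h2⟩
  have hpos : 0 < radFn K u := lt_of_lt_of_le (by positivity) (hle _ (by positivity) hmem.2)
  have hclos : radFn K u ∈ closure {r : ℝ | 0 < r ∧ r • u ∈ K} :=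
    csSup_mem_closure ⟨_, hmem⟩ hbdd
  have hKc : IsClosed {t : ℝ | t • u ∈ K} :=
    hc.isClosed.preimage (continuous_id.smul continuous_const)
  have hsub : closure {r : ℝ | 0 < r ∧ r • u ∈ K} ⊆ {t : ℝ | t • u ∈ K} :=
    hKc.closure_subset_iff.mpr fun t ht => ht.2
  exact ⟨hpos, hsub hclos, hle⟩

lemma smul_mem_of_le_radFn (hK : Convex ℝ K) (hc : IsCompact K) (h0 : (0 : E) ∈ interior K)
    {u : E} (hu : ‖u‖ = 1) {t : ℝ} (ht0 : 0 < t) (htr : t ≤ radFn K u) : t • u ∈ K := by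
  obtain ⟨hpos, hmemK, -⟩ := radFn_basic hK hc h0 hu
  have h := hK.smul_mem_of_zero_mem (interior_subset h0) hmemK
    (t := t / radFn K u) ⟨by positivity, (div_le_one hpos).mpr htr⟩
  rwa [smul_smul, div_mul_cancel₀ _ hpos.ne'] at h

lemma closedBall_subset_of_le_radFn (hK : Convex ℝ K) (hc : IsCompact K)
    (h0 : (0 : E) ∈ interior K) {r : ℝ}
    (hmin : ∀ u : E, ‖u‖ = 1 → r ≤ radFn K u) :
    closedBall (0 : E) r ⊆ K := by
  intro y hy
  rw [mem_closedBall_zero_iff] at hy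
  rcases eq_or_ne y 0 with rfl | hy0
  · exact interior_subset h0
  · have hu : ‖(‖y‖⁻¹ • y : E)‖ = 1 := norm_smul_inv_norm hy0
    have hy' : y = ‖y‖ • (‖y‖⁻¹ • y : E) := by
      rw [smul_smul, mul_inv_cancel₀ (norm_ne_zero_iff.mpr hy0), one_smul]
    rw [hy']
    exact smul_mem_of_le_radFn hK hc h0 hu (norm_pos_iff.mpr hy0)
      (le_trans hy (hmin _ hu))

lemma inner_le_radFn_of_min (hK : Convex ℝ K) (hc : IsCompact K)
    (h0 : (0 : E) ∈ interior K) {w : E} (hw : ‖w‖ = 1)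
    (hmin : ∀ u : E, ‖u‖ = 1 → radFn K w ≤ radFn K u) :
    ∀ x ∈ K, ⟪x, w⟫ ≤ radFn K w := by
  set r := radFn K w with hrdef
  have hrpos : 0 < r := (radFn_basic hK hc h0 hw).1
  by_contra hcon
  push_neg at hcon
  obtain ⟨x, hxK, hpx⟩ := hcon
  set p : ℝ := ⟪x, w⟫ with hpdef
  set v : E := x - p • w with hvdef
  have hvw : ⟪v, w⟫ = (0 : ℝ) := by
    rw [hvdef, inner_sub_left, real_inner_smul_left, real_inner_self_eq_norm_sq, hw]
    simp [hpdef]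
  have hwv : ⟪w, v⟫ = (0 : ℝ) := by rw [real_inner_comm]; exact hvw
  set b := ‖v‖ with hbdef
  have hb0 : 0 ≤ b := norm_nonneg v
  set B := b + 1 with hBdef
  have hB : 0 < B := by positivity
  have hpr : 0 < p - r := by linarith
  set s := min (r / B) ((p - r) * r / (2 * B ^ 2)) with hsdef
  have hspos : 0 < s := lt_min (by positivity) (by positivity)
  have hsB : s * B ≤ r := by
    have h1 : s ≤ r / B := min_le_left _ _
    calc s * B ≤ (r / B) * B := by nlinarith
    _ = r := by field_simp
  have hsb : s * b ≤ r := by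
    have hexp : s * B = s * b + s := by rw [hBdef]; ring
    linarith
  have hsB2 : s * B ^ 2 ≤ (p - r) * r / 2 := by
    have h1 : s ≤ (p - r) * r / (2 * B ^ 2) := min_le_right _ _
    have h2 : (0:ℝ) < B ^ 2 := by positivity
    calc s * B ^ 2 ≤ ((p - r) * r / (2 * B ^ 2)) * B ^ 2 := by nlinarith
    _ = (p - r) * r / 2 := by field_simp
  set β := r - s ^ 2 * b ^ 2 / r with hβdef
  set a := β • w - s • v with hadef
  have hna2 : ‖a‖ ^ 2 = β ^ 2 + s ^ 2 * b ^ 2 := by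
    rw [hadef, norm_sub_sq_real, real_inner_smul_left, real_inner_smul_right, hwv,
      norm_smul, norm_smul, hw, hbdef]
    simp only [Real.norm_eq_abs, mul_one, mul_zero]
    rw [mul_pow, sq_abs, abs_of_pos hspos]
    ring
  have hsb2 : s ^ 2 * b ^ 2 ≤ r ^ 2 := by nlinarith [mul_nonneg hspos.le hb0, hsb, hrpos.le]
  have hnar : ‖a‖ ≤ r := by
    have h2 : ‖a‖ ^ 2 ≤ r ^ 2 := by
      rw [hna2, hβdef]
      have hr2 : (0:ℝ) < r ^ 2 := by positivity
      have : (r - s ^ 2 * b ^ 2 / r) ^ 2 = r ^ 2 - 2 * (s ^ 2 * b ^ 2) +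
          (s ^ 2 * b ^ 2) ^ 2 / r ^ 2 := by field_simp; ring
      rw [this]
      have h3 : (s ^ 2 * b ^ 2) ^ 2 / r ^ 2 ≤ s ^ 2 * b ^ 2 := by
        rw [div_le_iff₀ hr2]
        nlinarith [sq_nonneg (s * b)]
      nlinarith [sq_nonneg (s * b)]
    nlinarith [norm_nonneg a]
  have haK : a ∈ K := closedBall_subset_of_le_radFn hK hc h0 hmin
    (mem_closedBall_zero_iff.mpr hnar)
  have h1s : (0:ℝ) < 1 + s := by linarith
  set γ := (β + s * p) / (1 + s) with hγdef
  have hzK : γ • w ∈ K := by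
    have hcomb : (1 / (1 + s)) • a + (s / (1 + s)) • x ∈ K :=
      hK haK hxK (by positivity) (by positivity) (by field_simp)
    have hx' : x = p • w + v := by rw [hvdef]; abel
    have : (1 / (1 + s)) • a + (s / (1 + s)) • x = γ • w := by
      rw [hadef, hx', hγdef]
      match_scalars <;> field_simp <;> ring
    rwa [this] at hcomb
  have hγr : r < γ := by
    rw [hγdef, lt_div_iff₀ h1s, hβdef]
    have hkey : s * b ^ 2 < (p - r) * r := by nlinarith
    have : s ^ 2 * b ^ 2 / r < s * (p - r) := by
      rw [div_lt_iff₀ hrpos]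
      nlinarith
    nlinarith
  have := (radFn_basic hK hc h0 hw).2.2 γ (lt_trans hrpos hγr) hzK
  rw [← hrdef] at this
  linarith

lemma gauge_eq_inv_radFn (hK : Convex ℝ K) (hc : IsCompact K) (h0 : (0 : E) ∈ interior K)
    {u : E} (hu : ‖u‖ = 1) : gauge K u = (radFn K u)⁻¹ := by
  obtain ⟨hpos, hmemK, hle⟩ := radFn_basic hK hc h0 hu
  rw [gauge_def']
  have hset : {r ∈ Set.Ioi (0:ℝ) | r⁻¹ • u ∈ K} = Set.Ici (radFn K u)⁻¹ := by
    ext t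
    simp only [Set.mem_sep_iff, Set.mem_Ioi, Set.mem_Ici]
    constructor
    · rintro ⟨ht, htK⟩
      have h2 := hle t⁻¹ (inv_pos.mpr ht) htK
      calc (radFn K u)⁻¹ ≤ (t⁻¹)⁻¹ := by
            exact inv_anti₀ (inv_pos.mpr ht) h2
      _ = t := inv_inv t
    · intro ht
      have ht0 : 0 < t := lt_of_lt_of_le (inv_pos.mpr hpos) ht
      have h2 : t⁻¹ ≤ radFn K u := by
        calc t⁻¹ ≤ ((radFn K u)⁻¹)⁻¹ := inv_anti₀ (inv_pos.mpr hpos) ht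
        _ = radFn K u := inv_inv _
      exact ⟨ht0, smul_mem_of_le_radFn hK hc h0 hu (inv_pos.mpr ht0) h2⟩
  rw [hset, csInf_Ici]

lemma radFn_integrand_continuous (hK : Convex ℝ K) (hc : IsCompact K)
    (h0 : (0 : E) ∈ interior K) (q : ℝ) :
    Continuous (fun u : sphere (0 : E) 1 => radFn K (u : E) ^ q) := by
  have hnorm : ∀ u : sphere (0 : E) 1, ‖(u : E)‖ = 1 := fun u =>
    mem_sphere_zero_iff_norm.mp u.2
  have hg : Continuous fun u : sphere (0 : E) 1 => gauge K (u : E) :=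
    (continuous_gauge hK (mem_interior_iff_mem_nhds.mp h0)).comp continuous_subtype_val
  have heq : (fun u : sphere (0 : E) 1 => radFn K (u : E)) =
      fun u : sphere (0 : E) 1 => (gauge K (u : E))⁻¹ := by
    funext u
    rw [gauge_eq_inv_radFn hK hc h0 (hnorm u), inv_inv]
  have hne : ∀ u : sphere (0 : E) 1, gauge K (u : E) ≠ 0 := fun u => by
    rw [gauge_eq_inv_radFn hK hc h0 (hnorm u)]
    exact inv_ne_zero (radFn_basic hK hc h0 (hnorm u)).1.ne'
  have hcont : Continuous fun u : sphere (0 : E) 1 => radFn K (u : E) := by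
    rw [heq]; exact hg.inv₀ hne
  exact hcont.rpow_const fun u =>
    Or.inl (radFn_basic hK hc h0 (hnorm u)).1.ne'

end Aux

/-- For `q < 0` and a convex body `K` with `0` in its interior, letting
`r = min_{S^{n-1}} ρ_K`, one has `∫_{S^{n-1}} ρ_K^q du ≈ r^q` with constants
depending only on `n` and `q`. -/
theorem radial_power_integral_estimate_neg (n : ℕ) (hn : 0 < n) (q : ℝ) (hq : q < 0) :
    ∃ c C : ℝ, 0 < c ∧ 0 < C ∧
      ∀ K : Set (EuclideanSpace ℝ (Fin n)), Convex ℝ K → IsCompact K →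
        (0 : EuclideanSpace ℝ (Fin n)) ∈ interior K →
      ∀ r : ℝ, IsLeast (radFn K '' sphere (0 : EuclideanSpace ℝ (Fin n)) 1) r →
        c * r ^ q ≤
          (∫ u : sphere (0 : EuclideanSpace ℝ (Fin n)) 1,
            radFn K (u : EuclideanSpace ℝ (Fin n)) ^ q
            ∂(volume : Measure (EuclideanSpace ℝ (Fin n))).toSphere) ∧
        (∫ u : sphere (0 : EuclideanSpace ℝ (Fin n)) 1,
            radFn K (u : EuclideanSpace ℝ (Fin n)) ^ q
            ∂(volume : Measure (EuclideanSpace ℝ (Fin n))).toSphere) ≤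
          C * r ^ q := by
  set σ := (volume : Measure (EuclideanSpace ℝ (Fin n))).toSphere with hσdef
  set σ₀ : ENNReal := (n : ENNReal) * volume (ball (0 : EuclideanSpace ℝ (Fin n)) (1/8))
    with hσ₀def
  have hσ₀pos : 0 < σ₀ := by
    refine ENNReal.mul_pos ?_ (measure_ball_pos _ _ (by norm_num)).ne'
    exact_mod_cast Nat.cast_pos.mpr hn |>.ne'
  have hσ₀top : σ₀ ≠ ⊤ :=
    ENNReal.mul_ne_top (ENNReal.natCast_ne_top n) measure_ball_lt_top.ne
  refine ⟨2 ^ q * σ₀.toReal, (σ Set.univ).toReal + 1, ?_, ?_, ?_⟩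
  · exact mul_pos (Real.rpow_pos_of_pos two_pos q)
      (ENNReal.toReal_pos hσ₀pos.ne' hσ₀top)
  · positivity
  intro K hK hc h0 r hr
  obtain ⟨w0, hw0s, hw0⟩ := hr.1
  have hw : ‖w0‖ = 1 := mem_sphere_zero_iff_norm.mp hw0s
  have hmin : ∀ u : EuclideanSpace ℝ (Fin n), ‖u‖ = 1 → r ≤ radFn K u := fun u hu =>
    hr.2 ⟨u, mem_sphere_zero_iff_norm.mpr hu, rfl⟩
  have hrpos : 0 < r := hw0 ▸ (radFn_basic hK hc h0 hw).1
  have hnormS : ∀ u : sphere (0 : EuclideanSpace ℝ (Fin n)) 1, ‖(u : EuclideanSpace ℝ (Fin n))‖ = 1 :=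
    fun u => mem_sphere_zero_iff_norm.mp u.2
  have hcont := radFn_integrand_continuous hK hc h0 q
  have hint : Integrable (fun u : sphere (0 : EuclideanSpace ℝ (Fin n)) 1 =>
      radFn K (u : EuclideanSpace ℝ (Fin n)) ^ q) σ :=
    integrableOn_univ.mp (hcont.continuousOn.integrableOn_compact isCompact_univ)
  constructor
  · -- lower bound
    have hhalf : ∀ x ∈ K, ⟪x, w0⟫ ≤ r := by
      have := inner_le_radFn_of_min hK hc h0 hw (fun u hu => hw0 ▸ hmin u hu)
      rwa [hw0] at this
    set cap : Set (sphere (0 : EuclideanSpace ℝ (Fin n)) 1) :=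
      {u | 1/2 ≤ ⟪(u : EuclideanSpace ℝ (Fin n)), w0⟫} with hcapdef
    have hcapm : MeasurableSet cap :=
      (isClosed_le continuous_const (continuous_subtype_val.inner continuous_const)).measurableSet
    -- cap has measure at least σ₀
    have hsub : ball ((3/4 : ℝ) • w0) (1/8) ⊆
        Set.Ioo (0:ℝ) 1 • (Subtype.val '' cap) := by
      intro x hx
      rw [mem_ball, dist_eq_norm] at hx
      have hn34 : ‖(3/4 : ℝ) • w0‖ = 3/4 := by
        rw [norm_smul, hw, mul_one, Real.norm_eq_abs]; norm_num
      have hxu : ‖x‖ ≤ 7/8 := by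
        have h1 := norm_sub_norm_le x ((3/4 : ℝ) • w0)
        rw [hn34] at h1; linarith
      have hxl : (5/8 : ℝ) ≤ ‖x‖ := by
        have h1 := norm_sub_norm_le ((3/4 : ℝ) • w0) x
        rw [hn34, norm_sub_rev] at h1; linarith
      have hx0 : x ≠ 0 := by
        intro h; rw [h, norm_zero] at hxl; linarith
      have hxn : (0:ℝ) < ‖x‖ := by linarith
      have hip : (5/8 : ℝ) ≤ ⟪x, w0⟫ := by
        have h1 : ⟪x, w0⟫ = ⟪x - (3/4 : ℝ) • w0, w0⟫ + (3/4 : ℝ) * ⟪w0, w0⟫ := by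
          rw [inner_sub_left, real_inner_smul_left]; ring
        have h2 : |⟪x - (3/4 : ℝ) • w0, w0⟫| ≤ ‖x - (3/4 : ℝ) • w0‖ * ‖w0‖ :=
          abs_real_inner_le_norm _ _
        rw [hw, mul_one] at h2
        have h3 : ⟪w0, w0⟫ = (1:ℝ) := by
          rw [real_inner_self_eq_norm_sq, hw]; norm_num
        rw [h3] at h1
        have h4 := neg_abs_le ⟪x - (3/4 : ℝ) • w0, w0⟫
        linarith
      have hcapmem : (⟨‖x‖⁻¹ • x, by
          rw [mem_sphere_zero_iff_norm]; exact norm_smul_inv_norm hx0⟩ :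
          sphere (0 : EuclideanSpace ℝ (Fin n)) 1) ∈ cap := by
        rw [hcapdef, Set.mem_setOf_eq]
        show (1:ℝ)/2 ≤ ⟪‖x‖⁻¹ • x, w0⟫
        rw [real_inner_smul_left]
        have hinv : (1:ℝ) ≤ ‖x‖⁻¹ := by
          rw [le_inv_comm₀ one_pos hxn]; linarith
        nlinarith
      refine Set.mem_smul.mpr ⟨‖x‖, ⟨hxn, by linarith⟩, ‖x‖⁻¹ • x,
        ⟨_, hcapmem, rfl⟩, ?_⟩
      rw [smul_smul, mul_inv_cancel₀ hxn.ne', one_smul]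
    have hcapmeas : σ₀ ≤ σ cap := by
      rw [hσdef, Measure.toSphere_apply' _ hcapm, finrank_euclideanSpace_fin, hσ₀def]
      refine mul_le_mul_right ?_ _
      calc volume (ball (0 : EuclideanSpace ℝ (Fin n)) (1/8))
          = volume (ball ((3/4 : ℝ) • w0) (1/8)) :=
            (Measure.addHaar_ball_center volume _ _).symm
        _ ≤ volume (Set.Ioo (0:ℝ) 1 • (Subtype.val '' cap)) := measure_mono hsub
    -- pointwise bound on the cap
    have hle2r : ∀ u ∈ cap, radFn K ((u : sphere (0 : EuclideanSpace ℝ (Fin n)) 1) :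
        EuclideanSpace ℝ (Fin n)) ≤ 2 * r := by
      intro u hu
      obtain ⟨hpos, hmemK, -⟩ := radFn_basic hK hc h0 (hnormS u)
      have h1 := hhalf _ hmemK
      rw [real_inner_smul_left] at h1
      have h2 : (1:ℝ)/2 ≤ ⟪(u : EuclideanSpace ℝ (Fin n)), w0⟫ := hu
      nlinarith
    have hptwise : Set.indicator cap
        (fun _ => (2*r) ^ q) ≤ fun u : sphere (0 : EuclideanSpace ℝ (Fin n)) 1 =>
        radFn K (u : EuclideanSpace ℝ (Fin n)) ^ q := by
      intro u
      by_cases hu : u ∈ cap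
      · rw [Set.indicator_of_mem hu]
        exact Real.rpow_le_rpow_of_nonpos (radFn_basic hK hc h0 (hnormS u)).1
          (hle2r u hu) hq.le
      · rw [Set.indicator_of_notMem hu]
        exact Real.rpow_nonneg (radFn_basic hK hc h0 (hnormS u)).1.le q
    have hmono := integral_mono ((integrable_const ((2*r) ^ q)).indicator hcapm) hint hptwise
    rw [integral_indicator_const _ hcapm, smul_eq_mul] at hmono
    calc 2 ^ q * σ₀.toReal * r ^ q = σ₀.toReal * (2*r) ^ q := by
          rw [Real.mul_rpow two_pos.le hrpos.le]; ring
      _ ≤ (σ cap).toReal * (2*r) ^ q := by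
          refine mul_le_mul_of_nonneg_right ?_ (Real.rpow_nonneg (by linarith) q)
          exact (ENNReal.toReal_le_toReal hσ₀top (measure_ne_top σ cap)).mpr hcapmeas
      _ ≤ _ := hmono
  · -- upper bound
    have hptw : (fun u : sphere (0 : EuclideanSpace ℝ (Fin n)) 1 =>
        radFn K (u : EuclideanSpace ℝ (Fin n)) ^ q) ≤ fun _ => r ^ q := fun u =>
      Real.rpow_le_rpow_of_nonpos hrpos (hmin _ (hnormS u)) hq.le
    have hmono := integral_mono hint (integrable_const (r ^ q)) hptw
    rw [integral_const, smul_eq_mul] at hmono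
    calc (∫ u : sphere (0 : EuclideanSpace ℝ (Fin n)) 1,
          radFn K (u : EuclideanSpace ℝ (Fin n)) ^ q ∂σ) ≤ (σ Set.univ).toReal * r ^ q := hmono
      _ ≤ ((σ Set.univ).toReal + 1) * r ^ q := by
          refine mul_le_mul_of_nonneg_right (by linarith) (Real.rpow_nonneg hrpos.le q)
end

section
/- Let μ be a finite Borel measure on S^{n-1} not concentrated in any closed hemisphere, and let (h_k) be a sequence of support functions of convex bodies containing 0 in their interiors, with min h_k = 1 for all k. Then there exist a subsequence (h_{k'}), constants ε₀, δ₀ ∈ (0,1), and an index k₀ such that for all k' ≥ k₀, (1/μ(S^{n-1})) ∫_{S^{n-1}} log h_{k'} dμ ≥ log((δ₀/2)·(max h_{k'})^{ε₀}). -/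
/-!
Let `x_k` maximize `h_k` on the sphere and let `ξ_k ∈ K_k` realize `h_k(x_k)`. Then
`‖ξ_k‖ ≥ max h_k`, so with `u_k = ξ_k / ‖ξ_k‖` we get `h_k ≥ (max h_k) ⟪u_k, ·⟫` wherever
`⟪u_k, ·⟫ ≥ 0`. Along a subsequence `u_k → x₀`. Since `μ` charges the open hemisphere around
`x₀`, it charges a cap `A = {⟪·, x₀⟫ ≥ δ}`, on which eventually `h_k ≥ (δ/2) max h_k`. As
`log h_k ≥ 0`, Markov's inequality gives `∫ log h_k dμ ≥ μ(A) log((δ/2) max h_k)`, and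
`ε₀ = min (1/2) (μ(A)/μ(S^{n-1}))`, `δ₀ = (δ/2)^ε₀` do the job.
-/

open Metric MeasureTheory RealInnerProductSpace

/-- The support function `h_K(x) = max{ξ·x : ξ ∈ K}`. -/
noncomputable def suppFn {n : ℕ} (K : Set (EuclideanSpace ℝ (Fin n)))
    (x : EuclideanSpace ℝ (Fin n)) : ℝ :=
  sSup ((fun ξ => ⟪ξ, x⟫) '' K)

open Set

section SupportFunction

variable {n : ℕ} {K : Set (EuclideanSpace ℝ (Fin n))}

theorem continuous_suppFn (hK : IsCompact K) : Continuous (suppFn K) :=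
  hK.continuous_sSup (f := fun x ξ => ⟪ξ, x⟫) (continuous_snd.inner continuous_fst)

theorem inner_le_suppFn (hK : IsCompact K) {ξ : EuclideanSpace ℝ (Fin n)} (hξ : ξ ∈ K)
    (x : EuclideanSpace ℝ (Fin n)) : ⟪ξ, x⟫ ≤ suppFn K x :=
  le_csSup (hK.image (continuous_id.inner continuous_const)).bddAbove ⟨ξ, hξ, rfl⟩

theorem exists_mem_inner_eq_suppFn (hK : IsCompact K) (hne : K.Nonempty)
    (x : EuclideanSpace ℝ (Fin n)) : ∃ ξ ∈ K, ⟪ξ, x⟫ = suppFn K x :=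
  (hK.image (continuous_id.inner continuous_const)).sSup_mem (hne.image _)

theorem exists_unit_sSup_mul_inner_le_suppFn (hK : IsCompact K) (hne : K.Nonempty)
    (hpos : 0 < sSup (suppFn K '' sphere 0 1)) :
    ∃ u : EuclideanSpace ℝ (Fin n), ‖u‖ = 1 ∧ ∀ y, 0 ≤ ⟪u, y⟫ →
      sSup (suppFn K '' sphere 0 1) * ⟪u, y⟫ ≤ suppFn K y := by
  have hS : (suppFn K '' sphere 0 1).Nonempty :=
    nonempty_iff_ne_empty.2 fun hS => by simp [hS] at hpos
  obtain ⟨x, hx, hxmax⟩ := ((isCompact_sphere 0 1).image (continuous_suppFn hK)).sSup_mem hS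
  obtain ⟨ξ, hξK, hξx⟩ := exists_mem_inner_eq_suppFn hK hne x
  have hξ : suppFn K x ≤ ‖ξ‖ := by
    rw [← hξx]
    exact (real_inner_le_norm ξ x).trans
      (mul_le_of_le_one_right (norm_nonneg ξ) (mem_sphere_zero_iff_norm.1 hx).le)
  have hξ0 : ‖ξ‖ ≠ 0 := (hpos.trans_le (hxmax ▸ hξ)).ne'
  refine ⟨‖ξ‖⁻¹ • ξ, by rw [norm_smul, norm_inv, norm_norm, inv_mul_cancel₀ hξ0], fun y hy => ?_⟩
  calc sSup (suppFn K '' sphere 0 1) * ⟪‖ξ‖⁻¹ • ξ, y⟫ ≤ ‖ξ‖ * ⟪‖ξ‖⁻¹ • ξ, y⟫ :=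
        mul_le_mul_of_nonneg_right (hxmax ▸ hξ) hy
    _ = ⟪ξ, y⟫ := by rw [real_inner_smul_left, mul_inv_cancel_left₀ hξ0]
    _ ≤ suppFn K y := inner_le_suppFn hK hξK y

end SupportFunction

theorem half_mul_le_of_mul_inner_le {E : Type*} [NormedAddCommGroup E] [InnerProductSpace ℝ E]
    {g : E → ℝ} {M δ : ℝ} {u x₀ x : E} (hg : ∀ y, 0 ≤ ⟪u, y⟫ → M * ⟪u, y⟫ ≤ g y) (hM : 0 ≤ M)
    (hu : ‖u - x₀‖ < δ / 2) (hx : ‖x‖ ≤ 1) (hδ : δ ≤ ⟪x, x₀⟫) : δ / 2 * M ≤ g x := by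
  have hdiff : ⟪x₀ - u, x⟫ ≤ ‖u - x₀‖ := norm_sub_rev u x₀ ▸
    (real_inner_le_norm _ _).trans (mul_le_of_le_one_right (norm_nonneg _) hx)
  have hux : δ / 2 ≤ ⟪u, x⟫ := by
    rw [inner_sub_left, real_inner_comm x] at hdiff
    linarith
  calc δ / 2 * M ≤ ⟪u, x⟫ * M := mul_le_mul_of_nonneg_right hux hM
    _ = M * ⟪u, x⟫ := mul_comm _ _
    _ ≤ g x := hg x (by linarith [norm_nonneg (u - x₀)])

namespace MeasureTheory

theorem exists_measure_setOf_inv_le_pos {α : Type*} [MeasurableSpace α] {μ : Measure α}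
    {f : α → ℝ} (hf : 0 < μ {x | 0 < f x}) : ∃ m : ℕ, 0 < μ {x | ((m : ℝ) + 1)⁻¹ ≤ f x} := by
  have hcover : {x | 0 < f x} ⊆ ⋃ m : ℕ, {x | ((m : ℝ) + 1)⁻¹ ≤ f x} := fun x hx =>
    let ⟨m, hm⟩ := exists_nat_one_div_lt (show 0 < f x from hx)
    mem_iUnion.2 ⟨m, show _ ≤ f x by rw [← one_div]; exact hm.le⟩
  exact exists_measure_pos_of_not_measure_iUnion_null (hf.trans_le (measure_mono hcover)).ne'

theorem _root_.Continuous.integrable_log {X : Type*} [TopologicalSpace X] [CompactSpace X]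
    [MeasurableSpace X] [OpensMeasurableSpace X] {μ : Measure X} [IsFiniteMeasure μ] {f : X → ℝ}
    (hf : Continuous f) (h0 : ∀ x, f x ≠ 0) : Integrable (fun x => Real.log (f x)) μ :=
  (hf.log h0).integrable_of_hasCompactSupport (HasCompactSupport.of_compactSpace _)

theorem mul_log_le_average_log {α : Type*} [MeasurableSpace α] {μ : Measure α}
    [IsFiniteMeasure μ] {f : α → ℝ} (hf : ∀ x, 1 ≤ f x)
    (hint : Integrable (fun x => Real.log (f x)) μ) {A : Set α} {L : ℝ} (hL : 0 < L)
    (hfA : ∀ x ∈ A, L ≤ f x) {ε : ℝ} (hε : 0 ≤ ε) (hεA : ε ≤ μ.real A / μ.real univ) :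
    ε * Real.log L ≤ (μ univ).toReal⁻¹ * ∫ x, Real.log (f x) ∂μ := by
  have hA : A ⊆ {x | Real.posLog L ≤ Real.log (f x)} := fun x hx =>
    show max 0 (Real.log L) ≤ Real.log (f x) from
      max_le (Real.log_nonneg (hf x)) (Real.log_le_log hL (hfA x hx))
  have hmarkov : Real.posLog L * μ.real A ≤ ∫ x, Real.log (f x) ∂μ :=
    (mul_le_mul_of_nonneg_left (measureReal_mono (μ := μ) hA) Real.posLog_nonneg).trans
      (mul_meas_ge_le_integral_of_nonneg (ae_of_all _ fun x => Real.log_nonneg (hf x)) hint _)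
  calc ε * Real.log L ≤ ε * Real.posLog L := mul_le_mul_of_nonneg_left (le_max_right _ _) hε
    _ ≤ μ.real A / μ.real univ * Real.posLog L :=
        mul_le_mul_of_nonneg_right hεA Real.posLog_nonneg
    _ = (μ.real univ)⁻¹ * (Real.posLog L * μ.real A) := by ring
    _ ≤ (μ univ).toReal⁻¹ * ∫ x, Real.log (f x) ∂μ :=
        mul_le_mul_of_nonneg_left hmarkov (by positivity)

end MeasureTheory

theorem Real.log_rpow_div_two_mul_rpow_le {a b : ℝ} (ha : 0 < a) (hb : 0 < b) (ε : ℝ) :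
    Real.log (a ^ ε / 2 * b ^ ε) ≤ ε * Real.log (a * b) := by
  rw [div_mul_eq_mul_div, ← Real.mul_rpow ha.le hb.le, Real.log_div (by positivity) two_ne_zero,
    Real.log_rpow (by positivity)]
  linarith [Real.log_pos one_lt_two]

theorem entropy_type_estimate_general (n : ℕ)
    (μ : Measure (sphere (0 : EuclideanSpace ℝ (Fin n)) 1)) [IsFiniteMeasure μ]
    (hμ : ∀ x₀ ∈ sphere (0 : EuclideanSpace ℝ (Fin n)) 1,
      0 < μ {x : sphere (0 : EuclideanSpace ℝ (Fin n)) 1 |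
        0 < ⟪(x : EuclideanSpace ℝ (Fin n)), x₀⟫})
    (h : ℕ → EuclideanSpace ℝ (Fin n) → ℝ)
    (hbody : ∀ k, ∃ K : Set (EuclideanSpace ℝ (Fin n)), Convex ℝ K ∧ IsCompact K ∧
      (0 : EuclideanSpace ℝ (Fin n)) ∈ interior K ∧ ∀ x, h k x = suppFn K x)
    (hmin : ∀ k, IsLeast (h k '' sphere (0 : EuclideanSpace ℝ (Fin n)) 1) 1) :
    ∃ φ : ℕ → ℕ, StrictMono φ ∧
      ∃ ε₀ δ₀ : ℝ, ε₀ ∈ Set.Ioo (0 : ℝ) 1 ∧ δ₀ ∈ Set.Ioo (0 : ℝ) 1 ∧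
        ∃ k₀ : ℕ, ∀ j ≥ k₀,
          Real.log ((δ₀ / 2) *
              sSup (h (φ j) '' sphere (0 : EuclideanSpace ℝ (Fin n)) 1) ^ ε₀) ≤
            (μ Set.univ).toReal⁻¹ *
              ∫ x : sphere (0 : EuclideanSpace ℝ (Fin n)) 1,
                Real.log (h (φ j) (x : EuclideanSpace ℝ (Fin n))) ∂μ := by
  choose K _ hK hK0 hhK using hbody
  obtain rfl : h = fun k => suppFn (K k) := funext fun k => funext (hhK k)
  have hone : ∀ k (x : sphere (0 : EuclideanSpace ℝ (Fin n)) 1), 1 ≤ suppFn (K k) x :=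
    fun k x => (hmin k).2 ⟨x, x.2, rfl⟩
  have hM : ∀ k, 0 < sSup (suppFn (K k) '' sphere 0 1) := fun k => one_pos.trans_le <|
    le_csSup ((isCompact_sphere 0 1).image (continuous_suppFn (hK k))).bddAbove (hmin k).1
  choose u hu hsupp using fun k =>
    exists_unit_sSup_mul_inner_le_suppFn (hK k) ⟨0, interior_subset (hK0 k)⟩ (hM k)
  obtain ⟨x₀, hx₀, φ, hφ, hlim⟩ :=
    (isCompact_sphere 0 1).tendsto_subseq fun k => mem_sphere_zero_iff_norm.2 (hu k)
  obtain ⟨m, hA⟩ := exists_measure_setOf_inv_le_pos (hμ x₀ hx₀)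
  set δ : ℝ := ((m : ℝ) + 1)⁻¹
  set A := {x : sphere (0 : EuclideanSpace ℝ (Fin n)) 1 |
    δ ≤ ⟪(x : EuclideanSpace ℝ (Fin n)), x₀⟫}
  have hδ0 : 0 < δ := by positivity
  have hδ1 : δ ≤ 1 := inv_le_one_of_one_le₀ (le_add_of_nonneg_left (Nat.cast_nonneg m))
  set ε₀ := min (1 / 2) (μ.real A / μ.real univ)
  have hA' : 0 < μ.real A := ENNReal.toReal_pos hA.ne' (measure_ne_top μ A)
  have hε₀ : 0 < ε₀ :=
    lt_min one_half_pos (div_pos hA' (hA'.trans_le (measureReal_mono (subset_univ A))))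
  obtain ⟨k₀, hk₀⟩ := Metric.tendsto_atTop.1 hlim (δ / 2) (by positivity)
  refine ⟨φ, hφ, ε₀, (δ / 2) ^ ε₀, ⟨hε₀, (min_le_left _ _).trans_lt one_half_lt_one⟩,
    ⟨by positivity, Real.rpow_lt_one (by positivity) (by linarith) hε₀⟩, k₀, fun j hj => ?_⟩
  have hcap : ∀ x ∈ A, δ / 2 * sSup (suppFn (K (φ j)) '' sphere 0 1) ≤ suppFn (K (φ j)) x :=
    fun x hx => half_mul_le_of_mul_inner_le (hsupp _) (hM _).le
      (dist_eq_norm (u (φ j)) x₀ ▸ hk₀ j hj) (mem_sphere_zero_iff_norm.1 x.2).le hx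
  have hint := ((continuous_suppFn (hK (φ j))).comp continuous_subtype_val).integrable_log
    (μ := μ) fun x => (one_pos.trans_le (hone _ x)).ne'
  calc _ ≤ ε₀ * Real.log (δ / 2 * sSup (suppFn (K (φ j)) '' sphere 0 1)) :=
        Real.log_rpow_div_two_mul_rpow_le (half_pos hδ0) (hM _) ε₀
    _ ≤ _ := mul_log_le_average_log (hone _) hint (mul_pos (half_pos hδ0) (hM _)) hcap hε₀.le
        (min_le_right _ _)

/-- Entropy-type estimate (Lemma 5.1): if `μ` is a finite Borel measure on `S^{n-1}` not
concentrated in any closed hemisphere and `(h_k)` are support functions of convex bodies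
containing `0` in their interiors with `min h_k = 1`, then along a subsequence and for
suitable `ε₀, δ₀ ∈ (0,1)` and large indices,
`(1/|μ|)∫ log h_{k'} dμ ≥ log((δ₀/2)(max h_{k'})^{ε₀})`. -/
theorem entropy_type_estimate (n : ℕ) (hn : 0 < n)
    (μ : Measure (sphere (0 : EuclideanSpace ℝ (Fin n)) 1)) [IsFiniteMeasure μ]
    (hμ : ∀ x₀ ∈ sphere (0 : EuclideanSpace ℝ (Fin n)) 1,
      0 < μ {x : sphere (0 : EuclideanSpace ℝ (Fin n)) 1 |
        0 < ⟪(x : EuclideanSpace ℝ (Fin n)), x₀⟫})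
    (h : ℕ → EuclideanSpace ℝ (Fin n) → ℝ)
    (hbody : ∀ k, ∃ K : Set (EuclideanSpace ℝ (Fin n)), Convex ℝ K ∧ IsCompact K ∧
      (0 : EuclideanSpace ℝ (Fin n)) ∈ interior K ∧ ∀ x, h k x = suppFn K x)
    (hmin : ∀ k, IsLeast (h k '' sphere (0 : EuclideanSpace ℝ (Fin n)) 1) 1) :
    ∃ φ : ℕ → ℕ, StrictMono φ ∧
      ∃ ε₀ δ₀ : ℝ, ε₀ ∈ Set.Ioo (0 : ℝ) 1 ∧ δ₀ ∈ Set.Ioo (0 : ℝ) 1 ∧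
        ∃ k₀ : ℕ, ∀ j ≥ k₀,
          Real.log ((δ₀ / 2) *
              sSup (h (φ j) '' sphere (0 : EuclideanSpace ℝ (Fin n)) 1) ^ ε₀) ≤
            (μ Set.univ).toReal⁻¹ *
              ∫ x : sphere (0 : EuclideanSpace ℝ (Fin n)) 1,
                Real.log (h (φ j) (x : EuclideanSpace ℝ (Fin n))) ∂μ :=
  entropy_type_estimate_general n μ hμ h hbody hmin
end
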